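/- Let f(z) = z + Σ_{k≥2} a_k z^k − conj(z) be harmonic with an isolated singular zero at the origin, and let n ≥ 2 be minimal with a_n ≠ 0. If n is even and Re(a_n) ≠ 0, then ind(f; 0) = 0. -/

import Mathlib

open Complex Set

/-- `WindingOn f z0 r m` : the winding of `f` along the positively oriented circle of
radius `r` centered at `z0` equals `m`, expressed via a continuous branch of the argument. -/
def WindingOn (f : ℂ → ℂ) (z0 : ℂ) (r : ℝ) (m : ℤ) : Prop :=
  ∃ θ : ℝ → ℝ, ContinuousOn θ (Set.Icc 0 (2 * Real.pi)) ∧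
    (∀ t ∈ Set.Icc 0 (2 * Real.pi),
      f (z0 + r * Complex.exp (Complex.I * t)) =
        (‖f (z0 + r * Complex.exp (Complex.I * t))‖ : ℂ) *
          Complex.exp (Complex.I * (θ t : ℝ))) ∧
    θ (2 * Real.pi) - θ 0 = 2 * Real.pi * m

/-- The Poincaré index of `f` at `z0` is `m`: the winding along all sufficiently
small circles around `z0` equals `m`. -/
def HasIndex (f : ℂ → ℂ) (z0 : ℂ) (m : ℤ) : Prop :=
  ∃ r0 > 0, ∀ r : ℝ, 0 < r → r < r0 → WindingOn f z0 r m

/-!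
Write `f z = z - z̄ + c zⁿ + O(|z|ⁿ⁺¹)` with `c = aₙ` and `n = 2m`. At a point of the circle
`|z| = r` where `f z` is real, the purely imaginary `z - z̄` must cancel `Im (c zⁿ) + O(rⁿ⁺¹)`, so
`|z - z̄| = O(rⁿ)`. Since `z² - r² = z (z - z̄)`, `z²` lies within `O(rⁿ⁺¹)` of `r²`, hence
`zⁿ = (z²)ᵐ` within `O(rⁿ⁺¹)` of `rⁿ`, and `Re f z = Re c · rⁿ + O(rⁿ⁺¹)` has the sign of `Re c`
for small `r`. So `f` maps small circles into a slit plane, where `arg` is a continuous branch of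
the argument, and the winding number vanishes.
-/

open ComplexConjugate Metric Filter Topology Asymptotics FormalMultilinearSeries

lemma windingOn_zero_of_mapsTo_slitPlane {f : ℂ → ℂ} {z₀ : ℂ} {r : ℝ} (hr : 0 ≤ r)
    (hf : ContinuousOn f (sphere z₀ r)) (hslit : MapsTo f (sphere z₀ r) slitPlane) :
    WindingOn f z₀ r 0 := by
  have hcircle : ∀ t : ℝ, z₀ + r * exp (I * t) = circleMap z₀ r t := fun t => by
    rw [circleMap, mul_comm I]
  refine ⟨fun t => arg (f (circleMap z₀ r t)), ?_, fun t _ => ?_, ?_⟩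
  · refine ContinuousOn.comp (t := slitPlane) (fun w hw => (continuousAt_arg hw).continuousWithinAt)
      ?_ fun t _ => hslit (circleMap_mem_sphere z₀ hr t)
    exact hf.comp (continuous_circleMap z₀ r).continuousOn
      fun t _ => circleMap_mem_sphere z₀ hr t
  · rw [hcircle, mul_comm I]
    exact (norm_mul_exp_arg_mul_I _).symm
  · simp [(periodic_circleMap z₀ r).eq]

lemma WindingOn.of_neg {f : ℂ → ℂ} {z₀ : ℂ} {r : ℝ} {m : ℤ} (h : WindingOn (-f) z₀ r m) :
    WindingOn f z₀ r m := by
  obtain ⟨θ, hθc, hθ, hθm⟩ := h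
  refine ⟨fun t => θ t + Real.pi, hθc.add continuousOn_const, fun t ht => ?_, by linarith⟩
  have h := congrArg Neg.neg (hθ t ht)
  simp only [Pi.neg_apply, neg_neg, norm_neg] at h
  have hrot : exp (I * ((θ t + Real.pi : ℝ) : ℂ)) = -exp (I * (θ t : ℂ)) := by
    push_cast
    rw [mul_add, exp_add, mul_comm I (Real.pi : ℂ), exp_pi_mul_I, mul_neg_one]
  rw [hrot, mul_neg]
  exact h

lemma windingOn_zero_of_mul_re_pos {f : ℂ → ℂ} {z₀ : ℂ} {r α : ℝ} (hr : 0 ≤ r)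
    (hf : ContinuousOn f (sphere z₀ r)) (hα : α ≠ 0)
    (hpos : ∀ z ∈ sphere z₀ r, (f z).im = 0 → 0 < α * (f z).re) :
    WindingOn f z₀ r 0 := by
  rcases hα.lt_or_gt with hα | hα
  · refine (windingOn_zero_of_mapsTo_slitPlane hr hf.neg fun z hz => ?_).of_neg
    rw [mem_slitPlane_iff, Pi.neg_apply, neg_re, neg_im, neg_ne_zero, neg_pos]
    by_cases him : (f z).im = 0
    · exact .inl (neg_of_mul_pos_right (hpos z hz him) hα.le)
    · exact .inr him
  · refine windingOn_zero_of_mapsTo_slitPlane hr hf fun z hz => ?_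
    rw [mem_slitPlane_iff]
    by_cases him : (f z).im = 0
    · exact .inl (pos_of_mul_pos_right (hpos z hz him) hα.le)
    · exact .inr him

lemma hasFPowerSeriesAt_ofScalars_of_hasSum {𝕜 : Type*} [NontriviallyNormedField 𝕜]
    [CompleteSpace 𝕜] {a : ℕ → 𝕜} {g : 𝕜 → 𝕜} {R : ℝ} (hR : 0 < R)
    (hsum : ∀ z : 𝕜, ‖z‖ < R → HasSum (fun k => a k * z ^ k) (g z)) :
    HasFPowerSeriesAt g (ofScalars 𝕜 a) 0 := by
  obtain ⟨z, hz0, hzR⟩ := NormedField.exists_norm_lt 𝕜 hR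
  have hradius : (‖z‖₊ : ENNReal) ≤ (ofScalars 𝕜 a).radius := by
    refine le_radius_of_tendsto _ (l := 0) ?_
    simpa [ofScalars_norm] using (hsum z hzR).summable.tendsto_atTop_zero.norm
  have hpos : 0 < (ofScalars 𝕜 a).radius := lt_of_lt_of_le (by simpa using hz0) hradius
  refine ((ofScalars 𝕜 a).hasFPowerSeriesOnBall hpos).hasFPowerSeriesAt.congr ?_
  filter_upwards [ball_mem_nhds (0 : 𝕜) hR] with w hw
  rw [← ofScalarsSum, ofScalars_sum_eq, (hsum w (mem_ball_zero_iff.1 hw)).tsum_eq.symm]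
  simp [smul_eq_mul]

lemma norm_pow_sub_pow_le {A : Type*} [NormedCommRing A] [NormOneClass A] {x y : A} {ρ : ℝ}
    (hx : ‖x‖ ≤ ρ) (hy : ‖y‖ ≤ ρ) (m : ℕ) :
    ‖x ^ m - y ^ m‖ ≤ m * ρ ^ (m - 1) * ‖x - y‖ := by
  have hρ : 0 ≤ ρ := (norm_nonneg x).trans hx
  rw [← geom_sum₂_mul]
  refine (norm_mul_le _ _).trans (mul_le_mul_of_nonneg_right ?_ (norm_nonneg _))
  calc ‖∑ i ∈ Finset.range m, x ^ i * y ^ (m - 1 - i)‖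
      ≤ ∑ i ∈ Finset.range m, ρ ^ (m - 1) := by
        refine norm_sum_le_of_le _ fun i hi => ?_
        calc ‖x ^ i * y ^ (m - 1 - i)‖ ≤ ‖x‖ ^ i * ‖y‖ ^ (m - 1 - i) :=
              (norm_mul_le _ _).trans (mul_le_mul (norm_pow_le _ _) (norm_pow_le _ _)
                (norm_nonneg _) (by positivity))
          _ ≤ ρ ^ i * ρ ^ (m - 1 - i) := by gcongr
          _ = ρ ^ (m - 1) := by
            rw [← pow_add]; congr 1; have := Finset.mem_range.1 hi; omega
    _ = m * ρ ^ (m - 1) := by simp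

lemma norm_sub_conj_le_of_im_eq_zero {z v : ℂ} (him : (z - conj z + v).im = 0) :
    ‖z - conj z‖ ≤ ‖v‖ := by
  have h : 2 * z.im = -v.im := by simp [sub_conj] at him; linarith
  rw [sub_conj, norm_mul, norm_real, norm_I, mul_one, Real.norm_eq_abs, h, abs_neg]
  exact abs_im_le_norm v

lemma sq_sub_norm_sq_eq_mul_sub_conj (z : ℂ) : z ^ 2 - (‖z‖ : ℂ) ^ 2 = z * (z - conj z) := by
  rw [← mul_conj']; ring

lemma abs_re_sub_re_mul_pow_le {z c w : ℂ} {m : ℕ} {C : ℝ} (hz : ‖z‖ ≤ 1) (hC : 0 ≤ C)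
    (hw : ‖w - (z - conj z + c * z ^ (2 * m))‖ ≤ C * ‖z‖ ^ (2 * m + 1)) (him : w.im = 0) :
    |w.re - c.re * ‖z‖ ^ (2 * m)| ≤ (‖c‖ * m * (‖c‖ + C) + C) * ‖z‖ ^ (2 * m + 1) := by
  set r := ‖z‖
  set E := w - (z - conj z + c * z ^ (2 * m))
  have hw_eq : w = z - conj z + (c * z ^ (2 * m) + E) := by ring
  have hconj : ‖z - conj z‖ ≤ (‖c‖ + C) * r ^ (2 * m) := by
    refine (norm_sub_conj_le_of_im_eq_zero (hw_eq ▸ him)).trans ?_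
    calc ‖c * z ^ (2 * m) + E‖ ≤ ‖c‖ * r ^ (2 * m) + C * r ^ (2 * m + 1) := by
          grw [norm_add_le, norm_mul, norm_pow, hw]
      _ ≤ ‖c‖ * r ^ (2 * m) + C * r ^ (2 * m) := by
          grw [pow_le_pow_of_le_one (norm_nonneg z) hz (Nat.le_succ (2 * m))]
      _ = (‖c‖ + C) * r ^ (2 * m) := by ring
  have hpow : ‖z ^ (2 * m) - (r : ℂ) ^ (2 * m)‖ ≤ m * ((‖c‖ + C) * r ^ (2 * m + 1)) := by
    have hsq : ‖z ^ 2 - (r : ℂ) ^ 2‖ ≤ (‖c‖ + C) * r ^ (2 * m + 1) := by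
      rw [sq_sub_norm_sq_eq_mul_sub_conj, norm_mul, pow_succ', ← mul_assoc, mul_comm _ r, mul_assoc]
      exact mul_le_mul_of_nonneg_left hconj (norm_nonneg z)
    have h1 : ‖z ^ 2‖ ≤ 1 := by rw [norm_pow]; exact pow_le_one₀ (norm_nonneg z) hz
    have h2 : ‖(r : ℂ) ^ 2‖ ≤ 1 := by
      rwa [norm_pow, norm_real, Real.norm_of_nonneg (norm_nonneg z), ← norm_pow]
    simp only [pow_mul]
    grw [norm_pow_sub_pow_le h1 h2 m, one_pow, mul_one, hsq]
  have hre : w.re - c.re * r ^ (2 * m) = (c * (z ^ (2 * m) - (r : ℂ) ^ (2 * m)) + E).re := by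
    rw [hw_eq]; simp [sub_conj, ← ofReal_pow]; ring
  rw [hre]
  calc |(c * (z ^ (2 * m) - (r : ℂ) ^ (2 * m)) + E).re|
      ≤ ‖c‖ * ‖z ^ (2 * m) - (r : ℂ) ^ (2 * m)‖ + ‖E‖ := by
        grw [abs_re_le_norm, norm_add_le, norm_mul]
    _ ≤ ‖c‖ * (m * ((‖c‖ + C) * r ^ (2 * m + 1))) + C * r ^ (2 * m + 1) := by
        grw [hpow, hw]
    _ = (‖c‖ * m * (‖c‖ + C) + C) * r ^ (2 * m + 1) := by ring

lemma mul_pos_of_abs_sub_mul_le {u α p K r : ℝ} (hp : 0 < p) (hKr : K * r < |α|)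
    (h : |u - α * p| ≤ K * r * p) : 0 < α * u := by
  have hKr0 : 0 ≤ K * r := nonneg_of_mul_nonneg_left ((abs_nonneg _).trans h) hp
  have herr : -(|α| * (K * r * p)) ≤ α * (u - α * p) := by
    refine le_trans ?_ (neg_abs_le _)
    rw [abs_mul, neg_le_neg_iff]
    exact mul_le_mul_of_nonneg_left h (abs_nonneg α)
  have hgain : |α| * (K * r * p) < α ^ 2 * p := by
    rw [← sq_abs, sq, mul_assoc |α|]
    exact mul_lt_mul_of_pos_left (mul_lt_mul_of_pos_right hKr hp) (hKr0.trans_lt hKr)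
  linear_combination herr + hgain

theorem hasIndex_zero_of_isBigO {f : ℂ → ℂ} {c : ℂ} {n : ℕ} (hn : Even n) (hc : c.re ≠ 0)
    (hf : ∀ᶠ z in 𝓝 0, ContinuousAt f z)
    (hO : (fun z => f z - (z - conj z + c * z ^ n)) =O[𝓝 0] fun z => ‖z‖ ^ (n + 1)) :
    HasIndex f 0 0 := by
  obtain ⟨m, rfl⟩ := even_iff_exists_two_mul.1 hn
  obtain ⟨C, hC0, hC⟩ := hO.exists_nonneg
  obtain ⟨ε, hε, hball⟩ := Metric.eventually_nhds_iff.1 (hf.and hC.bound)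
  set K := ‖c‖ * m * (‖c‖ + C) + C
  refine ⟨min ε (min 1 (|c.re| / (K + 1))), by positivity, fun r hr hr0 => ?_⟩
  have hrε : r < ε := hr0.trans_le (min_le_left _ _)
  have hr1 : r ≤ 1 := (hr0.trans_le ((min_le_right _ _).trans (min_le_left _ _))).le
  have hrK : K * r < |c.re| := by
    have : r < |c.re| / (K + 1) := hr0.trans_le ((min_le_right _ _).trans (min_le_right _ _))
    rw [lt_div_iff₀ (by positivity)] at this
    nlinarith
  have hsphere : ∀ z ∈ sphere (0 : ℂ) r, ‖z‖ = r ∧ dist z 0 < ε := fun z hz => by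
    rw [mem_sphere_zero_iff_norm] at hz
    exact ⟨hz, by rwa [dist_zero_right, hz]⟩
  refine windingOn_zero_of_mul_re_pos hr.le
    (fun z hz => (hball (hsphere z hz).2).1.continuousWithinAt) hc fun z hz him => ?_
  obtain ⟨hzr, hzε⟩ := hsphere z hz
  have hE := (hball hzε).2
  rw [norm_pow, norm_norm] at hE
  have hre := abs_re_sub_re_mul_pow_le (hzr.le.trans hr1) hC0 hE him
  rw [hzr, pow_succ', ← mul_assoc] at hre
  exact mul_pos_of_abs_sub_mul_le (pow_pos hr _) hrK hre

lemma partialSum_ofScalars_eq {a : ℕ → ℂ} {n : ℕ} (hn : 2 ≤ n) (ha0 : a 0 = 0) (ha1 : a 1 = 1)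
    (hmin : ∀ m, 2 ≤ m → m < n → a m = 0) (z : ℂ) :
    (ofScalars ℂ a).partialSum (n + 1) z = z + a n * z ^ n := by
  have hlow : ∑ k ∈ Finset.range n, a k * z ^ k = z := by
    rw [Finset.sum_eq_single_of_mem 1 (Finset.mem_range.2 (by omega)), ha1, pow_one, one_mul]
    intro k hk hk1
    obtain rfl | hk2 : k = 0 ∨ 2 ≤ k := by omega
    · rw [ha0, zero_mul]
    · rw [hmin k hk2 (Finset.mem_range.1 hk), zero_mul]
  simp only [partialSum, ofScalars_apply_eq, smul_eq_mul, Finset.sum_range_succ, hlow]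

theorem index_singular_even_case_general (a : ℕ → ℂ) (f : ℂ → ℂ) (R : ℝ) (hR : 0 < R)
    (ha0 : a 0 = 0) (ha1 : a 1 = 1)
    (hsum : ∀ z : ℂ, ‖z‖ < R →
      HasSum (fun k : ℕ => a k * z ^ k) (f z + (starRingEnd ℂ) z))
    (n : ℕ) (hn2 : 2 ≤ n)
    (hmin : ∀ m : ℕ, 2 ≤ m → m < n → a m = 0)
    (hnev : Even n) (hre : (a n).re ≠ 0) :
    HasIndex f 0 0 := by
  have hg := hasFPowerSeriesAt_ofScalars_of_hasSum hR hsum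
  have hf : f = fun z => (f z + conj z) - conj z := by simp
  refine hasIndex_zero_of_isBigO hnev hre ?_ ?_
  · filter_upwards [hg.analyticAt.eventually_analyticAt] with z hz
    rw [hf]
    exact hz.continuousAt.sub continuous_conj.continuousAt
  · refine (hg.isBigO_sub_partialSum_pow (n + 1)).congr_left fun z => ?_
    rw [zero_add, partialSum_ofScalars_eq hn2 ha0 ha1 hmin]
    ring

theorem index_singular_even_case (a : ℕ → ℂ) (f : ℂ → ℂ) (R : ℝ) (hR : 0 < R)
    (ha0 : a 0 = 0) (ha1 : a 1 = 1)
    (hsum : ∀ z : ℂ, ‖z‖ < R →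
      HasSum (fun k : ℕ => a k * z ^ k) (f z + (starRingEnd ℂ) z))
    (hiso : ∀ᶠ z in nhdsWithin 0 {(0 : ℂ)}ᶜ, f z ≠ 0)
    (n : ℕ) (hn2 : 2 ≤ n) (han : a n ≠ 0)
    (hmin : ∀ m : ℕ, 2 ≤ m → m < n → a m = 0)
    (hnev : Even n) (hre : (a n).re ≠ 0) :
    HasIndex f 0 0 :=
  index_singular_even_case_general a f R hR ha0 ha1 hsum n hn2 hmin hnev hre
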